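/- Let φ be a CTL formula, V ⊆ Var(φ), and q ∈ Var(φ)∖V. (i) If ψ is a result of forgetting (Var(φ) ∪ {q})∖V from φ ∧ q and Var(ψ) ⊆ V, then ψ is a strongest necessary condition of q on V under φ. (ii) If ψ' is a result of forgetting (Var(φ) ∪ {q})∖V from φ ∧ ¬q and Var(ψ') ⊆ V, then ¬ψ' is a weakest sufficient condition of q on V under φ. -/

import Mathlib

universe u

/-- A Kripke structure over a set of atoms: a finite nonempty set of states,
a serial transition relation, and a labeling function. -/
structure Kripke (Atom : Type u) where
  State : Type u
  stateFinite : Finite State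
  stateNonempty : Nonempty State
  R : State → State → Prop
  serial : ∀ s, ∃ t, R s t
  L : State → Set Atom

instance {Atom : Type u} (M : Kripke Atom) : Finite M.State := M.stateFinite

/-- A K-structure: a Kripke structure together with one of its states. -/
structure KStruct (Atom : Type u) where
  M : Kripke Atom
  s : M.State

/-- An initial structure: a Kripke structure with an initial state `s0`,
i.e. a state admitting a path visiting every state. -/
structure InitKripke (Atom : Type u) extends Kripke Atom where
  s0 : State
  initial : ∃ π : ℕ → State, π 0 = s0 ∧ (∀ n, R (π n) (π (n + 1))) ∧ ∀ t, ∃ n, π n = t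

/-- The (initial) K-structure associated to an initial structure. -/
def InitKripke.toKS {Atom : Type u} (M : InitKripke Atom) : KStruct Atom :=
  ⟨M.toKripke, M.s0⟩

/-- The approximations `B_n^V` of `V`-bisimilarity on K-structures. -/
def BRel {Atom : Type u} (V : Set Atom) : ℕ → KStruct Atom → KStruct Atom → Prop
  | 0 => fun K1 K2 => K1.M.L K1.s \ V = K2.M.L K2.s \ V
  | n + 1 => fun K1 K2 =>
      K1.M.L K1.s \ V = K2.M.L K2.s \ V ∧
      (∀ t1, K1.M.R K1.s t1 → ∃ t2, K2.M.R K2.s t2 ∧ BRel V n ⟨K1.M, t1⟩ ⟨K2.M, t2⟩) ∧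
      (∀ t2, K2.M.R K2.s t2 → ∃ t1, K1.M.R K1.s t1 ∧ BRel V n ⟨K1.M, t1⟩ ⟨K2.M, t2⟩)

/-- `V`-bisimilarity `K1 ↔_V K2` of K-structures. -/
def VBisim {Atom : Type u} (V : Set Atom) (K1 K2 : KStruct Atom) : Prop :=
  ∀ n, BRel V n K1 K2

/-- CTL formulas in existential normal form. -/
inductive CTL (Atom : Type u) : Type u
  | bot  : CTL Atom
  | top  : CTL Atom
  | atom (p : Atom) : CTL Atom
  | neg  (φ : CTL Atom) : CTL Atom
  | or   (φ ψ : CTL Atom) : CTL Atom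
  | EX   (φ : CTL Atom) : CTL Atom
  | EG   (φ : CTL Atom) : CTL Atom
  | EU   (φ ψ : CTL Atom) : CTL Atom

namespace CTL
variable {Atom : Type u}

def and (φ ψ : CTL Atom) : CTL Atom := .neg (.or (.neg φ) (.neg ψ))
def imp (φ ψ : CTL Atom) : CTL Atom := .or (.neg φ) ψ
def iff (φ ψ : CTL Atom) : CTL Atom := (φ.imp ψ).and (ψ.imp φ)
def AX (φ : CTL Atom) : CTL Atom := .neg (.EX (.neg φ))
def EF (φ : CTL Atom) : CTL Atom := .EU .top φ
def AF (φ : CTL Atom) : CTL Atom := .neg (.EG (.neg φ))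
def AG (φ : CTL Atom) : CTL Atom := .neg (.EU .top (.neg φ))

/-- The set of atoms occurring in a formula. -/
def vars : CTL Atom → Set Atom
  | .bot => ∅
  | .top => ∅
  | .atom p => {p}
  | .neg φ => vars φ
  | .or φ ψ => vars φ ∪ vars ψ
  | .EX φ => vars φ
  | .EG φ => vars φ
  | .EU φ ψ => vars φ ∪ vars ψ

end CTL

/-- The standard CTL satisfaction relation `(M,s) ⊨ φ`. -/
def Sat {Atom : Type u} (M : Kripke Atom) : CTL Atom → M.State → Prop
  | .bot => fun _ => False
  | .top => fun _ => True
  | .atom p => fun s => p ∈ M.L s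
  | .neg φ => fun s => ¬ Sat M φ s
  | .or φ ψ => fun s => Sat M φ s ∨ Sat M ψ s
  | .EX φ => fun s => ∃ t, M.R s t ∧ Sat M φ t
  | .EG φ => fun s => ∃ π : ℕ → M.State, π 0 = s ∧ (∀ n, M.R (π n) (π (n + 1))) ∧
      ∀ n, Sat M φ (π n)
  | .EU φ ψ => fun s => ∃ π : ℕ → M.State, π 0 = s ∧ (∀ n, M.R (π n) (π (n + 1))) ∧
      ∃ i, Sat M ψ (π i) ∧ ∀ j < i, Sat M φ (π j)

/-- Satisfaction for K-structures. -/
def KSat {Atom : Type u} (K : KStruct Atom) (φ : CTL Atom) : Prop := Sat K.M φ K.s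

/-- The set of models (initial K-structures) of a formula. -/
def CTLMod {Atom : Type u} (φ : CTL Atom) : Set (InitKripke Atom) :=
  {M | Sat M.toKripke φ M.s0}

def Entails {Atom : Type u} (φ ψ : CTL Atom) : Prop := CTLMod φ ⊆ CTLMod ψ

def CTLEquiv {Atom : Type u} (φ ψ : CTL Atom) : Prop := CTLMod φ = CTLMod ψ

/-- `IR φ V`: φ is irrelevant to the atoms in V. -/
def IR {Atom : Type u} (φ : CTL Atom) (V : Set Atom) : Prop :=
  ∃ ψ : CTL Atom, CTL.vars ψ ∩ V = ∅ ∧ CTLEquiv φ ψ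

/-- `V`-bisimilarity of depth-`n` computation trees rooted at `s1` (in `M1`) and `s2` (in `M2`). -/
def TreeBisim {Atom : Type u} (V : Set Atom) (M1 M2 : Kripke Atom) :
    ℕ → M1.State → M2.State → Prop
  | 0 => fun s1 s2 => M1.L s1 \ V = M2.L s2 \ V
  | n + 1 => fun s1 s2 =>
      M1.L s1 \ V = M2.L s2 \ V ∧
      (∀ t1, M1.R s1 t1 → ∃ t2, M2.R s2 t2 ∧ TreeBisim V M1 M2 n t1 t2) ∧
      (∀ t2, M2.R s2 t2 → ∃ t1, M1.R s1 t1 ∧ TreeBisim V M1 M2 n t1 t2)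

/-- Finite conjunction of a list of formulas. -/
def andList {Atom : Type u} : List (CTL Atom) → CTL Atom
  | [] => .top
  | φ :: l => φ.and (andList l)

/-- Finite disjunction of a list of formulas. -/
def orList {Atom : Type u} : List (CTL Atom) → CTL Atom
  | [] => .bot
  | φ :: l => .or φ (orList l)

/-- A list enumerating a subset of a finite type. -/
noncomputable def setToList {α : Type u} [Finite α] (s : Set α) : List α :=
  s.toFinite.toFinset.toList

/-- The list of `R`-successors of a state. -/
noncomputable def Kripke.succList {Atom : Type u} (M : Kripke Atom) (s : M.State) :
    List M.State :=
  setToList {t | M.R s t}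

/-- The characterizing formula `F_V(Tr_0(s))` of the depth-0 computation tree. -/
noncomputable def charTree0 {Atom : Type u} [Finite Atom] (M : Kripke Atom) (V : Set Atom)
    (s : M.State) : CTL Atom :=
  (andList ((setToList (V ∩ M.L s)).map CTL.atom)).and
    (andList ((setToList (V \ M.L s)).map fun q => CTL.neg (CTL.atom q)))

/-- The characterizing formula `F_V(Tr_n(s))` of the depth-`n` computation tree of `s`. -/
noncomputable def charTree {Atom : Type u} [Finite Atom] (M : Kripke Atom) (V : Set Atom) :
    ℕ → M.State → CTL Atom
  | 0 => fun s => charTree0 M V s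
  | k + 1 => fun s =>
      (andList ((M.succList s).map fun t => CTL.EX (charTree M V k t))).and
        ((CTL.AX (orList ((M.succList s).map (charTree M V k)))).and (charTree0 M V s))

/-- `dis_V(M,s,s',k)`: `s` and `s'` are `V`-distinguishable, and `k` is the least depth at which
their computation trees fail to be `(𝒜∖V)`-bisimilar. -/
def dis {Atom : Type u} (M : Kripke Atom) (V : Set Atom) (s s' : M.State) (k : ℕ) : Prop :=
  ¬ VBisim Vᶜ ⟨M, s⟩ ⟨M, s'⟩ ∧
  IsLeast {n | ¬ TreeBisim Vᶜ M M n s s'} k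

/-- The characterization number `ch(M,V)`. -/
noncomputable def ch {Atom : Type u} (M : Kripke Atom) (V : Set Atom) : ℕ :=
  letI := Classical.dec (∃ s s' k, dis M V s s' k)
  if ∃ s s' k, dis M V s s' k then
    sSup {k | ∃ s s', dis M V s s' k}
  else
    sInf {k | (fun s s' : M.State => BRel Vᶜ k ⟨M, s⟩ ⟨M, s'⟩) =
              (fun s s' : M.State => BRel Vᶜ (k + 1) ⟨M, s⟩ ⟨M, s'⟩)}

/-- The characterizing formula `F_V(M,s0)` of an initial K-structure on `V`. -/
noncomputable def charForm {Atom : Type u} [Finite Atom] (M : InitKripke Atom) (V : Set Atom) :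
    CTL Atom :=
  let T : M.State → CTL Atom := fun s => charTree M.toKripke V (ch M.toKripke V) s
  (T M.s0).and
    (andList ((setToList (Set.univ : Set M.State)).map fun s =>
      CTL.AG ((T s).imp
        ((andList ((M.toKripke.succList s).map fun t => CTL.EX (T t))).and
          (CTL.AX (orList ((M.toKripke.succList s).map T)))))))

/-- `ψ` is a result of forgetting `V` from `φ`. -/
def IsForget {Atom : Type u} (φ : CTL Atom) (V : Set Atom) (ψ : CTL Atom) : Prop :=
  CTL.vars ψ ∩ V = ∅ ∧
  CTLMod ψ = {K : InitKripke Atom | ∃ K' ∈ CTLMod φ, VBisim V K'.toKS K.toKS}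

/-- `ψ` is a necessary condition of `ℓ` on `V` under `φ`. -/
def IsNC {Atom : Type u} (φ ℓ : CTL Atom) (V : Set Atom) (ψ : CTL Atom) : Prop :=
  CTL.vars ψ ⊆ V ∧ Entails φ (ℓ.imp ψ)

/-- `ψ` is a sufficient condition of `ℓ` on `V` under `φ`. -/
def IsSC {Atom : Type u} (φ ℓ : CTL Atom) (V : Set Atom) (ψ : CTL Atom) : Prop :=
  CTL.vars ψ ⊆ V ∧ Entails φ (ψ.imp ℓ)

/-- `ψ` is a strongest necessary condition of `ℓ` on `V` under `φ`. -/
def IsSNC {Atom : Type u} (φ ℓ : CTL Atom) (V : Set Atom) (ψ : CTL Atom) : Prop :=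
  IsNC φ ℓ V ψ ∧ ∀ ψ' : CTL Atom, IsNC φ ℓ V ψ' → Entails φ (ψ.imp ψ')

/-- `ψ` is a weakest sufficient condition of `ℓ` on `V` under `φ`. -/
def IsWSC {Atom : Type u} (φ ℓ : CTL Atom) (V : Set Atom) (ψ : CTL Atom) : Prop :=
  IsSC φ ℓ V ψ ∧ ∀ ψ' : CTL Atom, IsSC φ ℓ V ψ' → Entails φ (ψ'.imp ψ)

/-! CTL formulas that avoid the atoms of `W` cannot distinguish `W`-bisimilar structures.
Hence forgetting `W` from `φ ∧ ℓ` yields the strongest consequence of `φ ∧ ℓ` that avoids `W`,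
which, for `W` disjoint from `V`, is the strongest necessary condition of `ℓ` on `V`. Dually,
the weakest sufficient condition of `q` is the negation of the strongest necessary condition
of `¬q`. -/

section

variable {Atom : Type u}

namespace BRel

variable {V : Set Atom}

theorem refl : ∀ (n : ℕ) (K : KStruct Atom), BRel V n K K
  | 0, _ => rfl
  | n + 1, _ => ⟨rfl, fun t ht => ⟨t, ht, refl n _⟩, fun t ht => ⟨t, ht, refl n _⟩⟩

theorem symm {n : ℕ} {K₁ K₂ : KStruct Atom} (h : BRel V n K₁ K₂) : BRel V n K₂ K₁ := by
  induction n generalizing K₁ K₂ with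
  | zero => exact Eq.symm h
  | succ n ih =>
    obtain ⟨hL, hforth, hback⟩ := h
    exact ⟨hL.symm,
      fun t₂ ht₂ => (hback t₂ ht₂).imp fun _ ⟨ht₁, hb⟩ => ⟨ht₁, ih hb⟩,
      fun t₁ ht₁ => (hforth t₁ ht₁).imp fun _ ⟨ht₂, hb⟩ => ⟨ht₂, ih hb⟩⟩

theorem of_succ {n : ℕ} {K₁ K₂ : KStruct Atom} (h : BRel V (n + 1) K₁ K₂) : BRel V n K₁ K₂ := by
  induction n generalizing K₁ K₂ with
  | zero => exact h.1
  | succ n ih =>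
    obtain ⟨hL, hforth, hback⟩ := h
    exact ⟨hL,
      fun t₁ ht₁ => (hforth t₁ ht₁).imp fun _ ⟨ht₂, hb⟩ => ⟨ht₂, ih hb⟩,
      fun t₂ ht₂ => (hback t₂ ht₂).imp fun _ ⟨ht₁, hb⟩ => ⟨ht₁, ih hb⟩⟩

theorem of_le {m n : ℕ} {K₁ K₂ : KStruct Atom} (hmn : m ≤ n) (h : BRel V n K₁ K₂) :
    BRel V m K₁ K₂ := by
  induction hmn with
  | refl => exact h
  | step _ ih => exact ih (of_succ h)

end BRel

namespace VBisim

variable {V : Set Atom}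

theorem refl (K : KStruct Atom) : VBisim V K K := fun n => BRel.refl n K

theorem symm {K₁ K₂ : KStruct Atom} (h : VBisim V K₁ K₂) : VBisim V K₂ K₁ :=
  fun n => (h n).symm

variable {M₁ M₂ : Kripke Atom} {s₁ : M₁.State} {s₂ : M₂.State}

/-- Each `B_{n+1}` provides a successor of `s₂` that is `B_n`-related to `t₁`; since `M₂` is
finite, one of these successors is chosen for infinitely many `n`, and it works for every `n`. -/
theorem exists_forth (h : VBisim V ⟨M₁, s₁⟩ ⟨M₂, s₂⟩) {t₁ : M₁.State} (ht₁ : M₁.R s₁ t₁) :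
    ∃ t₂, M₂.R s₂ t₂ ∧ VBisim V ⟨M₁, t₁⟩ ⟨M₂, t₂⟩ := by
  choose f hfR hfB using fun n => (h (n + 1)).2.1 t₁ ht₁
  obtain ⟨t₂, hfiber⟩ := Finite.exists_infinite_fiber f
  have hfiber : (f ⁻¹' {t₂}).Infinite := Set.infinite_coe_iff.mp hfiber
  obtain ⟨n₀, hn₀⟩ := hfiber.nonempty
  refine ⟨t₂, hn₀ ▸ hfR n₀, fun n => ?_⟩
  obtain ⟨m, hm, hnm⟩ := hfiber.exists_gt n
  exact BRel.of_le hnm.le (hm ▸ hfB m)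

theorem exists_back (h : VBisim V ⟨M₁, s₁⟩ ⟨M₂, s₂⟩) {t₂ : M₂.State} (ht₂ : M₂.R s₂ t₂) :
    ∃ t₁, M₁.R s₁ t₁ ∧ VBisim V ⟨M₁, t₁⟩ ⟨M₂, t₂⟩ :=
  (exists_forth h.symm ht₂).imp fun _ ⟨ht₁, hb⟩ => ⟨ht₁, hb.symm⟩

theorem exists_path {π : ℕ → M₁.State} (hπ : ∀ n, M₁.R (π n) (π (n + 1)))
    (h : VBisim V ⟨M₁, π 0⟩ ⟨M₂, s₂⟩) :
    ∃ σ : ℕ → M₂.State, σ 0 = s₂ ∧ (∀ n, M₂.R (σ n) (σ (n + 1))) ∧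
      ∀ n, VBisim V ⟨M₁, π n⟩ ⟨M₂, σ n⟩ := by
  choose next hnextR hnextB using fun n (t : M₂.State) (hb : VBisim V ⟨M₁, π n⟩ ⟨M₂, t⟩) =>
    exists_forth hb (hπ n)
  let σ : (n : ℕ) → {t : M₂.State // VBisim V ⟨M₁, π n⟩ ⟨M₂, t⟩} :=
    fun n => Nat.rec ⟨s₂, h⟩ (fun n t => ⟨next n t.1 t.2, hnextB n t.1 t.2⟩) n
  exact ⟨fun n => (σ n).1, rfl, fun n => hnextR n (σ n).1 (σ n).2, fun n => (σ n).2⟩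

end VBisim

theorem sat_iff_of_vBisim {W : Set Atom} {χ : CTL Atom} (hχ : Disjoint (CTL.vars χ) W)
    {M₁ M₂ : Kripke Atom} {s₁ : M₁.State} {s₂ : M₂.State} (h : VBisim W ⟨M₁, s₁⟩ ⟨M₂, s₂⟩) :
    Sat M₁ χ s₁ ↔ Sat M₂ χ s₂ := by
  induction χ generalizing s₁ s₂ with
  | bot | top => exact Iff.rfl
  | atom p =>
    have hp : p ∉ W := Set.disjoint_singleton_left.mp hχ
    simpa [Sat, hp] using Set.ext_iff.mp (h 0) p
  | neg χ ih => exact not_congr (ih hχ h)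
  | or χ₁ χ₂ ih₁ ih₂ =>
    obtain ⟨hχ₁, hχ₂⟩ := Set.disjoint_union_left.mp hχ
    exact or_congr (ih₁ hχ₁ h) (ih₂ hχ₂ h)
  | EX χ ih =>
    constructor
    · rintro ⟨t₁, ht₁, hsat⟩
      obtain ⟨t₂, ht₂, hb⟩ := h.exists_forth ht₁
      exact ⟨t₂, ht₂, (ih hχ hb).mp hsat⟩
    · rintro ⟨t₂, ht₂, hsat⟩
      obtain ⟨t₁, ht₁, hb⟩ := h.exists_back ht₂
      exact ⟨t₁, ht₁, (ih hχ hb).mpr hsat⟩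
  | EG χ ih =>
    constructor
    · rintro ⟨π, rfl, hπ, hsat⟩
      obtain ⟨σ, hσ₀, hσ, hb⟩ := VBisim.exists_path hπ h
      exact ⟨σ, hσ₀, hσ, fun n => (ih hχ (hb n)).mp (hsat n)⟩
    · rintro ⟨σ, rfl, hσ, hsat⟩
      obtain ⟨π, hπ₀, hπ, hb⟩ := VBisim.exists_path hσ h.symm
      exact ⟨π, hπ₀, hπ, fun n => (ih hχ (hb n).symm).mpr (hsat n)⟩
  | EU χ₁ χ₂ ih₁ ih₂ =>
    obtain ⟨hχ₁, hχ₂⟩ := Set.disjoint_union_left.mp hχ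
    constructor
    · rintro ⟨π, rfl, hπ, i, hi, hbefore⟩
      obtain ⟨σ, hσ₀, hσ, hb⟩ := VBisim.exists_path hπ h
      exact ⟨σ, hσ₀, hσ, i, (ih₂ hχ₂ (hb i)).mp hi,
        fun j hj => (ih₁ hχ₁ (hb j)).mp (hbefore j hj)⟩
    · rintro ⟨σ, rfl, hσ, i, hi, hbefore⟩
      obtain ⟨π, hπ₀, hπ, hb⟩ := VBisim.exists_path hσ h.symm
      exact ⟨π, hπ₀, hπ, i, (ih₂ hχ₂ (hb i).symm).mpr hi,
        fun j hj => (ih₁ hχ₁ (hb j).symm).mpr (hbefore j hj)⟩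

@[simp]
theorem mem_CTLMod {φ : CTL Atom} {M : InitKripke Atom} : M ∈ CTLMod φ ↔ Sat M.toKripke φ M.s0 :=
  Iff.rfl

@[simp]
theorem sat_neg {M : Kripke Atom} {φ : CTL Atom} {s : M.State} : Sat M φ.neg s ↔ ¬ Sat M φ s :=
  Iff.rfl

@[simp]
theorem sat_and {M : Kripke Atom} {φ ψ : CTL Atom} {s : M.State} :
    Sat M (φ.and ψ) s ↔ Sat M φ s ∧ Sat M ψ s := by
  simp [CTL.and, Sat]

@[simp]
theorem sat_imp {M : Kripke Atom} {φ ψ : CTL Atom} {s : M.State} :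
    Sat M (φ.imp ψ) s ↔ (Sat M φ s → Sat M ψ s) := by
  simp [CTL.imp, Sat, imp_iff_not_or]

theorem entails_imp_iff {φ χ ψ : CTL Atom} : Entails φ (χ.imp ψ) ↔ Entails (φ.and χ) ψ := by
  simp only [Entails, Set.subset_def, mem_CTLMod, sat_and, sat_imp, and_imp]

theorem Entails.entails_imp {φ χ ψ : CTL Atom} (h : Entails χ ψ) : Entails φ (χ.imp ψ) :=
  fun _ _ => sat_imp.mpr fun hχ => h hχ

namespace IsForget

variable {φ ψ : CTL Atom} {W : Set Atom}

theorem entails (h : IsForget φ W ψ) : Entails φ ψ := fun M hM => by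
  rw [h.2]
  exact ⟨M, hM, VBisim.refl _⟩

theorem entails_of_entails (h : IsForget φ W ψ) {χ : CTL Atom} (hχ : Disjoint (CTL.vars χ) W)
    (hφχ : Entails φ χ) : Entails ψ χ := fun M hM => by
  rw [h.2] at hM
  obtain ⟨M', hM', hb⟩ := hM
  exact (sat_iff_of_vBisim hχ hb).mp (hφχ hM')

end IsForget

section Conditions

variable {φ ℓ ψ : CTL Atom} {V W : Set Atom}

theorem isSNC_of_isForget (hVW : Disjoint V W) (hF : IsForget (φ.and ℓ) W ψ)
    (hψ : CTL.vars ψ ⊆ V) : IsSNC φ ℓ V ψ :=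
  ⟨⟨hψ, entails_imp_iff.mpr hF.entails⟩, fun _ ⟨hχV, hχ⟩ =>
    (hF.entails_of_entails (hVW.mono_left hχV) (entails_imp_iff.mp hχ)).entails_imp⟩

theorem IsSNC.isWSC_neg (h : IsSNC φ ℓ.neg V ψ) : IsWSC φ ℓ V ψ.neg := by
  obtain ⟨⟨hψV, hnec⟩, hstrongest⟩ := h
  refine ⟨⟨hψV, fun M hM => ?_⟩, fun χ ⟨hχV, hχ⟩ M hM => ?_⟩
  · simpa [not_imp_comm] using hnec hM
  · have hχ_neg : IsNC φ ℓ.neg V χ.neg :=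
      ⟨hχV, fun M hM => sat_imp.mpr (mt (sat_imp.mp (hχ hM)))⟩
    simpa [imp_not_comm] using hstrongest χ.neg hχ_neg hM

end Conditions

end

theorem snc_wsc_via_forget_general {Atom : Type u} (φ : CTL Atom) (V : Set Atom)
    (q : Atom) :
    (∀ ψ : CTL Atom,
      IsForget (φ.and (CTL.atom q)) ((CTL.vars φ ∪ {q}) \ V) ψ → CTL.vars ψ ⊆ V →
        IsSNC φ (CTL.atom q) V ψ) ∧
    (∀ ψ' : CTL Atom,
      IsForget (φ.and (CTL.neg (CTL.atom q))) ((CTL.vars φ ∪ {q}) \ V) ψ' →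
        CTL.vars ψ' ⊆ V →
        IsWSC φ (CTL.atom q) V (CTL.neg ψ')) :=
  ⟨fun _ hF hψ => isSNC_of_isForget Set.disjoint_sdiff_right hF hψ,
    fun _ hF hψ => (isSNC_of_isForget Set.disjoint_sdiff_right hF hψ).isWSC_neg⟩

/-- forgetting `(Var(φ) ∪ {q}) ∖ V` from `φ ∧ q` yields an SNC of `q` on `V`
under `φ`, and forgetting it from `φ ∧ ¬q` yields, after negation, a WSC of `q` on `V`
under `φ`. -/
theorem snc_wsc_via_forget {Atom : Type u} [Finite Atom] (φ : CTL Atom) (V : Set Atom)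
    (q : Atom) (hV : V ⊆ CTL.vars φ) (hq : q ∈ CTL.vars φ \ V) :
    (∀ ψ : CTL Atom,
      IsForget (φ.and (CTL.atom q)) ((CTL.vars φ ∪ {q}) \ V) ψ → CTL.vars ψ ⊆ V →
        IsSNC φ (CTL.atom q) V ψ) ∧
    (∀ ψ' : CTL Atom,
      IsForget (φ.and (CTL.neg (CTL.atom q))) ((CTL.vars φ ∪ {q}) \ V) ψ' →
        CTL.vars ψ' ⊆ V →
        IsWSC φ (CTL.atom q) V (CTL.neg ψ')) :=
  snc_wsc_via_forget_general φ V q
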